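/- For every integer l ≥ 1, the 2-adic valuation of ∏_{i=1}^{l} (9^l − 9^{i−1}) equals 4l − α(l); that is, ∏_{i=1}^{l} (9^l − 9^{i−1}) = 2^(4l−α(l))·(2s+1) for some natural number s. -/

import Mathlib

/-!
Each factor is 9^(i-1) (9^k - 1) with k = l - i + 1, and 9^k - 1 = 3^(2k) - 1, so the
lifting-the-exponent lemma at p = 2 gives it valuation 3 + ν₂(k). Summing over k = 1, …, l, the
product has valuation 3l + ν₂(l!), and Legendre's formula ν₂(l!) = l - α(l) finishes.
-/

open Finset Nat

lemma padicValNat_finset_prod {p : ℕ} [hp : Fact p.Prime] {ι : Type*} {s : Finset ι}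
    {f : ι → ℕ} (hf : ∀ i ∈ s, f i ≠ 0) :
    padicValNat p (∏ i ∈ s, f i) = ∑ i ∈ s, padicValNat p (f i) := by
  simp only [← Nat.factorization_def _ hp.out, Nat.factorization_prod hf, Finsupp.finsetSum_apply]

lemma pow_sub_pow_ne_zero_of_lt {b k l : ℕ} (hb : 1 < b) (hkl : k < l) : b ^ l - b ^ k ≠ 0 :=
  Nat.sub_ne_zero_of_lt (Nat.pow_lt_pow_right hb hkl)

lemma padicValNat_two_pow_two_mul_sub_one {x k : ℕ} (h1x : 1 < x) (hx : ¬2 ∣ x)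
    (hk : k ≠ 0) :
    padicValNat 2 (x ^ (2 * k) - 1) = padicValNat 2 (x ^ 2 - 1) + padicValNat 2 k := by
  have hlte := padicValNat.pow_two_sub_one h1x hx (mul_ne_zero two_ne_zero hk) (even_two_mul k)
  have h2k : padicValNat 2 (2 * k) = 1 + padicValNat 2 k := by
    rw [padicValNat.mul two_ne_zero hk, padicValNat_self]
  have hsq : padicValNat 2 (x ^ 2 - 1) = padicValNat 2 (x + 1) + padicValNat 2 (x - 1) := by
    rw [← padicValNat.mul (by omega) (by omega), ← Nat.sq_sub_sq, one_pow]
  omega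

lemma padicValNat_two_nine_pow_sub_one {k : ℕ} (hk : k ≠ 0) :
    padicValNat 2 (9 ^ k - 1) = 3 + padicValNat 2 k := by
  have h8 : padicValNat 2 (3 ^ 2 - 1) = 3 := by
    rw [show 3 ^ 2 - 1 = 2 ^ 3 by norm_num, padicValNat.prime_pow]
  rw [show 9 ^ k = 3 ^ (2 * k) by rw [pow_mul]; norm_num,
    padicValNat_two_pow_two_mul_sub_one (by norm_num) (by norm_num) hk, h8]

lemma padicValNat_two_nine_pow_sub_nine_pow {k l : ℕ} (hkl : k < l) :
    padicValNat 2 (9 ^ l - 9 ^ k) = 3 + padicValNat 2 (l - k) := by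
  have hsplit : 9 ^ l - 9 ^ k = 9 ^ k * (9 ^ (l - k) - 1) := by
    rw [Nat.mul_sub, mul_one, ← pow_add, Nat.add_sub_cancel' hkl.le]
  have hodd : padicValNat 2 (9 ^ k) = 0 :=
    padicValNat.eq_zero_of_not_dvd (Odd.pow (by decide)).not_two_dvd_nat
  rw [hsplit, padicValNat.mul (by positivity)
    (Nat.sub_ne_zero_of_lt (Nat.one_lt_pow (by omega) (by norm_num))),
    hodd, zero_add, padicValNat_two_nine_pow_sub_one (by omega)]

lemma exists_eq_two_pow_padicValNat_mul_odd {n : ℕ} (hn : n ≠ 0) :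
    ∃ s, n = 2 ^ padicValNat 2 n * (2 * s + 1) := by
  obtain ⟨k, m, ⟨s, rfl⟩, rfl⟩ := Nat.exists_eq_two_pow_mul_odd hn
  refine ⟨s, ?_⟩
  rw [padicValNat.mul (by positivity) (by omega), padicValNat.prime_pow,
    padicValNat.eq_zero_of_not_dvd (by omega), add_zero]

lemma sum_Icc_padicValNat_eq_padicValNat_factorial (p : ℕ) [Fact p.Prime] (n : ℕ) :
    ∑ k ∈ Icc 1 n, padicValNat p k = padicValNat p n ! := by
  rw [← Finset.Ico_add_one_right_eq_Icc, ← prod_Ico_id_eq_factorial,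
    padicValNat_finset_prod fun k hk => by simp at hk; omega]

lemma padicValNat_two_prod_nine_pow_sub (l : ℕ) :
    padicValNat 2 (∏ i ∈ Icc 1 l, (9 ^ l - 9 ^ (i - 1))) = 3 * l + padicValNat 2 l ! := by
  have hlt : ∀ i ∈ Icc 1 l, i - 1 < l := fun i hi => by simp at hi; omega
  have hreflect :
      ∑ i ∈ Icc 1 l, padicValNat 2 (l - (i - 1)) = ∑ k ∈ Icc 1 l, padicValNat 2 k :=
    sum_nbij' (fun i => l + 1 - i) (fun k => l + 1 - k) (by simp; omega) (by simp; omega)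
      (by simp; omega) (by simp; omega) (fun i hi => by simp at hi; congr 1; omega)
  rw [padicValNat_finset_prod fun i hi => pow_sub_pow_ne_zero_of_lt (by norm_num) (hlt i hi),
    sum_congr rfl fun i hi => padicValNat_two_nine_pow_sub_nine_pow (hlt i hi), sum_add_distrib,
    hreflect, sum_Icc_padicValNat_eq_padicValNat_factorial, sum_const, Nat.card_Icc, smul_eq_mul,
    Nat.add_sub_cancel, mul_comm]

theorem prod_nine_pow_sub_valuation_general (l : ℕ) :
    ∃ s : ℕ, ∏ i ∈ Finset.Icc 1 l, (9 ^ l - 9 ^ (i - 1)) =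
      2 ^ (4 * l - (Nat.digits 2 l).sum) * (2 * s + 1) := by
  have hlegendre := sub_one_mul_padicValNat_factorial (p := 2) l
  have hdigits := Nat.digit_sum_le 2 l
  have hval : padicValNat 2 (∏ i ∈ Icc 1 l, (9 ^ l - 9 ^ (i - 1))) =
      4 * l - (Nat.digits 2 l).sum := by
    rw [padicValNat_two_prod_nine_pow_sub]
    omega
  rw [← hval]
  exact exists_eq_two_pow_padicValNat_mul_odd <| prod_ne_zero_iff.mpr fun i hi =>
    pow_sub_pow_ne_zero_of_lt (by norm_num) (by simp at hi; omega)

theorem prod_nine_pow_sub_valuation (l : ℕ) (hl : 1 ≤ l) :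
    ∃ s : ℕ, ∏ i ∈ Finset.Icc 1 l, (9 ^ l - 9 ^ (i - 1)) =
      2 ^ (4 * l - (Nat.digits 2 l).sum) * (2 * s + 1) :=
  prod_nine_pow_sub_valuation_general l
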